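/- Let β > 0 and let φ : ℝ → ℝ be continuous and bounded with lim_{t→∞} (1/T)∫_0^T φ = c (Cesàro mean c). Then the Cesàro mean of Z_β φ exists and equals c/β: lim_{T→∞} (1/T) ∫_0^T (Z_β φ)(t) dt = c/β. -/

import Mathlib

/-!
`Z β φ = e^{-βt} ∫_{-∞}^t e^{βτ} φ(τ) dτ` solves `Z' = φ - β Z` and is bounded by `C / β` when
`|φ| ≤ C`. Integrating the differential equation over `[0, T]` gives
`β ∫_0^T Z = ∫_0^T φ - (Z T - Z 0)`, and after division by `T` the boundary term vanishes.
-/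

open MeasureTheory Real Filter

noncomputable def Z (β : ℝ) (φ : ℝ → ℝ) (t : ℝ) : ℝ :=
  ∫ τ in Set.Iic t, Real.exp (-β * (t - τ)) * φ τ

open Set

theorem hasDerivAt_integral_Iic {E : Type*} [NormedAddCommGroup E] [NormedSpace ℝ E]
    [CompleteSpace E] {g : ℝ → E} (hg : Continuous g) (hint : ∀ s, IntegrableOn g (Iic s))
    (t : ℝ) : HasDerivAt (fun s => ∫ τ in Iic s, g τ) (g t) t := by
  have hsplit :
      (fun s => ∫ τ in Iic s, g τ) = fun s => (∫ τ in Iic 0, g τ) + ∫ τ in 0..s, g τ := by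
    funext s
    rw [← intervalIntegral.integral_Iic_sub_Iic (hint 0) (hint s), add_sub_cancel]
  rw [hsplit]
  exact (intervalIntegral.integral_hasDerivAt_right (hg.intervalIntegrable 0 t)
    (hg.stronglyMeasurableAtFilter _ _) hg.continuousAt).const_add _

theorem exp_neg_mul_mul_exp_mul (β t : ℝ) : exp (-β * t) * exp (β * t) = 1 := by
  rw [← exp_add, neg_mul, neg_add_cancel, exp_zero]

theorem integrableOn_exp_mul_mul_Iic {β C : ℝ} {φ : ℝ → ℝ} (hβ : 0 < β)
    (hφ : AEStronglyMeasurable φ) (hC : ∀ t, |φ t| ≤ C) (t : ℝ) :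
    IntegrableOn (fun τ => exp (β * τ) * φ τ) (Iic t) :=
  (integrableOn_exp_mul_Iic hβ t).mul_bdd hφ.restrict (Eventually.of_forall hC)

namespace Z

variable {β C : ℝ} {φ : ℝ → ℝ}

theorem eq_exp_mul_integral (β : ℝ) (φ : ℝ → ℝ) (t : ℝ) :
    Z β φ t = exp (-β * t) * ∫ τ in Iic t, exp (β * τ) * φ τ := by
  rw [Z, ← integral_const_mul]
  congr 1 with τ
  rw [← mul_assoc, ← exp_add]
  ring_nf

theorem abs_le_div (hβ : 0 < β) (hC : ∀ t, |φ t| ≤ C) (t : ℝ) : |Z β φ t| ≤ C / β := by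
  have hbound : ‖∫ τ in Iic t, exp (β * τ) * φ τ‖ ≤ ∫ τ in Iic t, C * exp (β * τ) :=
    norm_integral_le_of_norm_le ((integrableOn_exp_mul_Iic hβ t).const_mul C)
      (Eventually.of_forall fun τ => by
        rw [norm_mul, norm_of_nonneg (exp_pos _).le, mul_comm]
        exact mul_le_mul_of_nonneg_right (hC τ) (exp_pos _).le)
  rw [integral_const_mul, integral_exp_mul_Iic hβ, Real.norm_eq_abs] at hbound
  calc |Z β φ t| = exp (-β * t) * |∫ τ in Iic t, exp (β * τ) * φ τ| := by
        rw [eq_exp_mul_integral, abs_mul, abs_of_pos (exp_pos _)]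
    _ ≤ exp (-β * t) * (C * (exp (β * t) / β)) := by gcongr
    _ = C / β * (exp (-β * t) * exp (β * t)) := by ring
    _ = C / β := by rw [exp_neg_mul_mul_exp_mul, mul_one]

theorem hasDerivAt (hβ : 0 < β) (hφ : Continuous φ) (hC : ∀ t, |φ t| ≤ C) (t : ℝ) :
    HasDerivAt (Z β φ) (φ t - β * Z β φ t) t := by
  have hF := hasDerivAt_integral_Iic (g := fun τ => exp (β * τ) * φ τ)
    ((continuous_const.mul continuous_id).rexp.mul hφ)
    (integrableOn_exp_mul_mul_Iic hβ hφ.aestronglyMeasurable hC) t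
  have hE : HasDerivAt (fun s => exp (-β * s)) (exp (-β * t) * -β) t := by
    simpa using ((hasDerivAt_id t).const_mul (-β)).exp
  rw [funext (eq_exp_mul_integral β φ)]
  refine (hE.mul hF).congr_deriv ?_
  linear_combination φ t * exp_neg_mul_mul_exp_mul β t

theorem mul_integral_eq (hβ : 0 < β) (hφ : Continuous φ) (hC : ∀ t, |φ t| ≤ C) (T : ℝ) :
    β * ∫ t in (0 : ℝ)..T, Z β φ t = (∫ t in (0 : ℝ)..T, φ t) - (Z β φ T - Z β φ 0) := by
  have hZ : Continuous (Z β φ) :=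
    continuous_iff_continuousAt.2 fun t => (hasDerivAt hβ hφ hC t).continuousAt
  have hβZ : Continuous fun t => β * Z β φ t := continuous_const.mul hZ
  have hftc := intervalIntegral.integral_eq_sub_of_hasDerivAt (fun t _ => hasDerivAt hβ hφ hC t)
    ((hφ.sub hβZ).intervalIntegrable 0 T)
  rw [intervalIntegral.integral_sub (hφ.intervalIntegrable 0 T) (hβZ.intervalIntegrable 0 T),
    intervalIntegral.integral_const_mul] at hftc
  linarith

end Z

theorem stmt19 (β c : ℝ) (hβ : 0 < β) (φ : ℝ → ℝ) (hφc : Continuous φ)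
    (hφb : ∃ C, ∀ t, |φ t| ≤ C)
    (hmean : Tendsto (fun T : ℝ => (1 / T) * ∫ t in (0:ℝ)..T, φ t) atTop (nhds c)) :
    Tendsto (fun T : ℝ => (1 / T) * ∫ t in (0:ℝ)..T, Z β φ t) atTop (nhds (c / β)) := by
  obtain ⟨C, hC⟩ := hφb
  have hboundary : Tendsto (fun T : ℝ => (1 / T) * (Z β φ T - Z β φ 0)) atTop (nhds 0) := by
    refine (tendsto_inv_atTop_zero.congr fun T => (one_div T).symm).zero_mul_isBoundedUnder_le
      (isBoundedUnder_of ⟨2 * (C / β), fun T => ?_⟩)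
    have hT := Z.abs_le_div hβ hC T
    have h0 := Z.abs_le_div hβ hC 0
    simp only [Function.comp_apply, Real.norm_eq_abs]
    linarith [abs_sub (Z β φ T) (Z β φ 0)]
  have hlim := (hmean.sub hboundary).div_const β
  rw [sub_zero] at hlim
  refine hlim.congr fun T => ?_
  rw [div_eq_iff hβ.ne', mul_comm _ β, mul_left_comm, Z.mul_integral_eq hβ hφc hC]
  ring
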